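/- For every n ≥ 1, c(n) is the minimum of the Colless index over all rooted bifurcating trees with n leaves; that is, C(T) ≥ c(n) for every rooted bifurcating tree T with κ(T) = n, and there exists a rooted bifurcating tree T with κ(T) = n and C(T) = c(n). -/
import Mathlib


/-- The Colless index of the maximally balanced bifurcating tree with `n` leaves:
`c 1 = 0` and `c n = c ⌈n/2⌉ + c ⌊n/2⌋ + (⌈n/2⌉ - ⌊n/2⌋)` for `n ≥ 2`. -/
def c : ℕ → ℕ
  | 0 => 0
  | 1 => 0
  | n + 2 => c ((n + 3) / 2) + c ((n + 2) / 2) + ((n + 3) / 2 - (n + 2) / 2)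
decreasing_by all_goals omega

/-- Rooted bifurcating trees: full binary trees built from single-node leaves by
the root join operation. -/
inductive BTree : Type
  | leaf : BTree
  | node : BTree → BTree → BTree
deriving DecidableEq

/-- The number of leaves of a rooted bifurcating tree. -/
def kappa : BTree → ℕ
  | .leaf => 1
  | .node t₁ t₂ => kappa t₁ + kappa t₂

/-- The Colless index of a rooted bifurcating tree:
`C(leaf) = 0` and `C(T₁ ⋆ T₂) = C(T₁) + C(T₂) + |κ(T₁) - κ(T₂)|`. -/
def colless : BTree → ℕ
  | .leaf => 0
  | .node t₁ t₂ => colless t₁ + colless t₂ + Nat.dist (kappa t₁) (kappa t₂)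

/-- The maximally balanced tree with `n` leaves:
`B 1 = leaf` and `B n = B ⌈n/2⌉ ⋆ B ⌊n/2⌋` for `n ≥ 2`. -/
def B : ℕ → BTree
  | 0 => .leaf
  | 1 => .leaf
  | n + 2 => .node (B ((n + 3) / 2)) (B ((n + 2) / 2))
decreasing_by all_goals omega

lemma c_zero : c 0 = 0 := by simp [c]
lemma c_one : c 1 = 0 := by simp [c]

lemma c_rec (n : ℕ) (h : 2 ≤ n) :
    c n = c ((n+1)/2) + c (n/2) + ((n+1)/2 - n/2) := by
  obtain ⟨m, rfl⟩ : ∃ m, n = m + 2 := ⟨n - 2, by omega⟩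
  rw [show (m+2+1)/2 = (m+3)/2 from by omega, show c (m+2) = c ((m+3)/2) + c ((m+2)/2) + ((m+3)/2 - (m+2)/2) from by rw [c]]

lemma c_subadd : ∀ n a b, a + b = n → c (a + b) ≤ c a + c b + Nat.dist a b := by
  intro n
  induction n using Nat.strong_induction_on with
  | _ n ih =>
  suffices H : ∀ a b, a ≤ b → a + b = n → c (a + b) ≤ c a + c b + Nat.dist a b by
    intro a b hab
    rcases le_total a b with h | h
    · exact H a b h hab
    · have := H b a h (by omega)
      rw [Nat.add_comm b a, Nat.dist_comm] at this
      omega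
  intro a b hle hab
  rcases Nat.lt_or_ge a 2 with ha | ha
  · -- a = 0 or a = 1
    interval_cases a
    · simp [c_zero, Nat.dist]
    · rcases Nat.lt_or_ge b 2 with hb | hb
      · interval_cases b
        · simp [c_rec 2 le_rfl, c_one, Nat.dist]
      · -- a = 1, b ≥ 2
        have hcb := c_rec b hb
        have hcn := c_rec (1 + b) (by omega)
        rw [show (1+b+1)/2 = b/2 + 1 from by omega, show (1+b)/2 = (b+1)/2 from by omega] at hcn
        have IH1 : c (b/2 + 1) ≤ c (b/2) + c 1 + Nat.dist (b/2) 1 :=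
          ih (b/2 + 1) (by omega) (b/2) 1 rfl
        simp only [Nat.dist, c_one] at *
        omega
  · -- 2 ≤ a ≤ b
    have hb : 2 ≤ b := le_trans ha hle
    have hca := c_rec a ha
    have hcb := c_rec b hb
    have hcn := c_rec (a + b) (by omega)
    have key : ∀ u v : ℕ, u + v = a + b → Nat.dist u v ≤ 1 →
        c (a + b) ≤ c u + c v + Nat.dist u v := by
      intro u v huv hd
      have hcases : (u = (a+b+1)/2 ∧ v = (a+b)/2) ∨ (v = (a+b+1)/2 ∧ u = (a+b)/2) := by
        simp only [Nat.dist] at hd; omega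
      rcases hcases with ⟨rfl, rfl⟩ | ⟨rfl, rfl⟩ <;>
        simp only [Nat.dist] at * <;> omega
    have IH1 : c ((a+1)/2 + b/2) ≤ c ((a+1)/2) + c (b/2) + Nat.dist ((a+1)/2) (b/2) :=
      ih ((a+1)/2 + b/2) (by omega) _ _ rfl
    have IH2 : c (a/2 + (b+1)/2) ≤ c (a/2) + c ((b+1)/2) + Nat.dist (a/2) ((b+1)/2) :=
      ih (a/2 + (b+1)/2) (by omega) _ _ rfl
    have hkey := key ((a+1)/2 + b/2) (a/2 + (b+1)/2) (by omega)
      (by simp only [Nat.dist]; omega)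
    simp only [Nat.dist] at *
    omega

lemma colless_lower : ∀ T : BTree, c (kappa T) ≤ colless T := by
  intro T
  induction T with
  | leaf => simp [kappa, colless, c_one]
  | node t₁ t₂ ih₁ ih₂ =>
    calc c (kappa (.node t₁ t₂)) = c (kappa t₁ + kappa t₂) := rfl
      _ ≤ c (kappa t₁) + c (kappa t₂) + Nat.dist (kappa t₁) (kappa t₂) :=
          c_subadd _ _ _ rfl
      _ ≤ colless t₁ + colless t₂ + Nat.dist (kappa t₁) (kappa t₂) := by omega
      _ = colless (.node t₁ t₂) := rfl

lemma kappa_pos (T : BTree) : 1 ≤ kappa T := by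
  induction T with
  | leaf => simp [kappa]
  | node t₁ t₂ ih₁ ih₂ => simp [kappa]; omega

lemma B_kappa : ∀ n, 1 ≤ n → kappa (B n) = n := by
  intro n
  induction n using Nat.strong_induction_on with
  | _ n ih =>
  intro hn
  match n, hn with
  | 1, _ => rw [show B 1 = .leaf from by rw [B]]; simp [kappa, colless, c_one]
  | (m+2), _ =>
    have h1 := ih ((m+3)/2) (by omega) (by omega)
    have h2 := ih ((m+2)/2) (by omega) (by omega)
    rw [show B (m+2) = .node (B ((m+3)/2)) (B ((m+2)/2)) from by rw [B]]
    simp only [kappa, h1, h2]; omega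

lemma B_colless : ∀ n, 1 ≤ n → colless (B n) = c n := by
  intro n
  induction n using Nat.strong_induction_on with
  | _ n ih =>
  intro hn
  match n, hn with
  | 1, _ => rw [show B 1 = .leaf from by rw [B]]; simp [kappa, colless, c_one]
  | (m+2), _ =>
    have h1 := ih ((m+3)/2) (by omega) (by omega)
    have h2 := ih ((m+2)/2) (by omega) (by omega)
    have k1 := B_kappa ((m+3)/2) (by omega)
    have k2 := B_kappa ((m+2)/2) (by omega)
    rw [show B (m+2) = .node (B ((m+3)/2)) (B ((m+2)/2)) from by rw [B],
      show c (m+2) = c ((m+3)/2) + c ((m+2)/2) + ((m+3)/2 - (m+2)/2) from by rw [c]]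
    simp only [colless, h1, h2, k1, k2, Nat.dist]
    omega

/-- For every `n ≥ 1`, `c n` is the minimum Colless index over all rooted
bifurcating trees with `n` leaves. -/
theorem c_is_min_colless (n : ℕ) (hn : 1 ≤ n) :
    (∀ T : BTree, kappa T = n → c n ≤ colless T) ∧
      (∃ T : BTree, kappa T = n ∧ colless T = c n) := by
  constructor
  · intro T hT
    rw [← hT]
    exact colless_lower T
  · exact ⟨B n, B_kappa n hn, B_colless n hn⟩
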